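/- Let (φ_t) be a non-elliptic semigroup in the unit disc 𝔻 with Denjoy-Wolff point 1, and write C(φ_t(0)) = ρ_t e^{iθ_t} with ρ_t > 0, θ_t ∈ (−π/2, π/2), where C is the Cayley transform. Then there exists K > 0 such that for all t ≥ 1, |v^o(t) + (1/2) log ω(1, Θ_t, ℍ)| ≤ K, where Θ_t := {iy : y ∈ ℝ, |y| ≥ ρ_t} and v^o is the orthogonal speed of (φ_t). -/

import Mathlib

open Complex Filter Topology Set MeasureTheory

noncomputable section

/-- The unit disc in the complex plane. -/
def unitDisc : Set ℂ := {z : ℂ | norm z < 1}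

/-- The inverse hyperbolic tangent: `arctanh x = (1/2)·log((1+x)/(1−x))`. -/
def arctanh (x : ℝ) : ℝ := (1 / 2) * Real.log ((1 + x) / (1 - x))

/-- The hyperbolic distance on the unit disc:
`k_𝔻(z,w) = arctanh |(z−w)/(1−conj(z)·w)|`. -/
def kD (z w : ℂ) : ℝ :=
  arctanh (norm ((z - w) / (1 - (starRingEnd ℂ) z * w)))

/-- `φ` is a continuous one-parameter semigroup of holomorphic self-maps of the unit disc. -/
structure IsDiscSemigroup (φ : ℝ → ℂ → ℂ) : Prop where
  mapsTo : ∀ t : ℝ, 0 ≤ t → Set.MapsTo (φ t) unitDisc unitDisc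
  holo : ∀ t : ℝ, 0 ≤ t → DifferentiableOn ℂ (φ t) unitDisc
  id0 : ∀ z ∈ unitDisc, φ 0 z = z
  comp : ∀ s t : ℝ, 0 ≤ s → 0 ≤ t → ∀ z ∈ unitDisc, φ (t + s) z = φ t (φ s z)
  cont : ContinuousOn (fun p : ℝ × ℂ => φ p.1 p.2) (Set.Ici 0 ×ˢ unitDisc)

/-- A semigroup in the disc is non-elliptic if it has no fixed point in the disc
for positive times. -/
structure IsNonElliptic (φ : ℝ → ℂ → ℂ) extends IsDiscSemigroup φ : Prop where
  noFixedPoint : ∀ t : ℝ, 0 < t → ∀ z ∈ unitDisc, φ t z ≠ z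

/-- `τ` is the Denjoy-Wolff point of the semigroup `φ`: a boundary point to which
all orbits converge. -/
def IsDenjoyWolff (φ : ℝ → ℂ → ℂ) (τ : ℂ) : Prop :=
  norm τ = 1 ∧ ∀ z ∈ unitDisc, Tendsto (fun t => φ t z) atTop (𝓝 τ)

/-- `h` is a Koenigs function of the semigroup `φ`: univalent on the disc with
`h(φ_t(z)) = h(z) + it`. -/
def IsKoenigs (φ : ℝ → ℂ → ℂ) (h : ℂ → ℂ) : Prop :=
  DifferentiableOn ℂ h unitDisc ∧ Set.InjOn h unitDisc ∧
    ∀ t : ℝ, 0 ≤ t → ∀ z ∈ unitDisc, h (φ t z) = h z + Complex.I * t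

/-- `p` is the hyperbolic orthogonal projection onto the geodesic `(−1,1)·τ`:
for every `z` in the disc, `p z` lies on the geodesic and minimizes the hyperbolic
distance from `z` to the geodesic. -/
def IsOrthProjection (τ : ℂ) (p : ℂ → ℂ) : Prop :=
  ∀ z ∈ unitDisc,
    (∃ r : ℝ, r ∈ Set.Ioo (-1 : ℝ) 1 ∧ p z = (r : ℂ) * τ) ∧
    ∀ r : ℝ, r ∈ Set.Ioo (-1 : ℝ) 1 → kD z (p z) ≤ kD z ((r : ℂ) * τ)

/-- The total speed `v(t) = k_𝔻(0, φ_t(0))` of a semigroup. -/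
def totalSpeed (φ : ℝ → ℂ → ℂ) (t : ℝ) : ℝ := kD 0 (φ t 0)

/-- The orthogonal speed `v^o(t) = k_𝔻(0, π(φ_t(0)))` of a semigroup, relative to the
orthogonal projection `p` onto the geodesic `(−1,1)·τ`. -/
def orthSpeed (φ : ℝ → ℂ → ℂ) (p : ℂ → ℂ) (t : ℝ) : ℝ := kD 0 (p (φ t 0))

/-- `δ⁺(t)`: the truncated distance from `z₀ + it` to the part of the complement of `Ω`
lying to the right of the vertical line through `z₀`. -/
def deltaPlus (Ω : Set ℂ) (z₀ : ℂ) (t : ℝ) : ℝ :=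
  min t (sInf {d : ℝ | ∃ w : ℂ, w ∉ Ω ∧ z₀.re ≤ w.re ∧ d = norm (w - (z₀ + Complex.I * t))})

/-- `δ⁻(t)`: the truncated distance from `z₀ + it` to the part of the complement of `Ω`
lying to the left of the vertical line through `z₀`. -/
def deltaMinus (Ω : Set ℂ) (z₀ : ℂ) (t : ℝ) : ℝ :=
  min t (sInf {d : ℝ | ∃ w : ℂ, w ∉ Ω ∧ w.re ≤ z₀.re ∧ d = norm (w - (z₀ + Complex.I * t))})

/-- `Ω` is quasi-symmetric with respect to vertical axes. -/
def QuasiSymmetric (Ω : Set ℂ) : Prop :=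
  ∃ z₀ ∈ Ω, ∃ K : ℝ, 0 < K ∧ ∀ t : ℝ, 0 ≤ t →
    K⁻¹ * deltaMinus Ω z₀ t ≤ deltaPlus Ω z₀ t ∧ deltaPlus Ω z₀ t ≤ K * deltaMinus Ω z₀ t

/-- `Ω` is starlike with respect to `w₀`: every segment from `w₀` to a point of `Ω`
is contained in `Ω`. -/
def StarlikeWrt (Ω : Set ℂ) (w₀ : ℂ) : Prop :=
  ∀ w ∈ Ω, ∀ s : ℝ, s ∈ Set.Icc (0 : ℝ) 1 → (1 - (s : ℂ)) * w₀ + (s : ℂ) * w ∈ Ω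

/-- The orbit of `0` converges non-tangentially to `τ`:
`limsup_{t→+∞} |τ − φ_t(0)|/(1 − |φ_t(0)|) < +∞`. -/
def ConvergesNonTangentially (φ : ℝ → ℂ → ℂ) (τ : ℂ) : Prop :=
  Filter.limsup (fun t : ℝ =>
    ((norm (τ - φ t 0) / (1 - norm (φ t 0)) : ℝ) : EReal)) atTop < ⊤

/-- `f` is eventually non-decreasing. -/
def EventuallyNondecreasing (f : ℝ → ℝ) : Prop :=
  ∃ T : ℝ, ∀ s t : ℝ, T ≤ s → s ≤ t → f s ≤ f t

/-- The Cayley transform from the unit disc to the right half-plane. -/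
def cayley (z : ℂ) : ℂ := (1 + z) / (1 - z)

/-- The inverse Cayley transform, from the right half-plane to the unit disc. -/
def cayleyInv (w : ℂ) : ℂ := (w - 1) / (w + 1)

/-- `Θ_ρ := {iy : y ∈ ℝ, |y| ≥ ρ}`, a subset of the imaginary axis. -/
def Theta (ρ : ℝ) : Set ℂ := {z : ℂ | ∃ y : ℝ, z = Complex.I * (y : ℂ) ∧ ρ ≤ |y|}

/-- `Γ*_t := {iy : |y| ≥ inf_{u ≥ t} ρ_u}`. -/
def GammaStar (ρ : ℝ → ℝ) (t : ℝ) : Set ℂ :=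
  {z : ℂ | ∃ y : ℝ, z = Complex.I * (y : ℂ) ∧ sInf {r : ℝ | ∃ u : ℝ, t ≤ u ∧ r = ρ u} ≤ |y|}

/-- The harmonic measure at `w` (a point of the right half-plane) of a Borel subset `E`
of the imaginary axis, with respect to the right half-plane:
`ω(w,E,ℍ) = (1/π) ∫_{{s : is ∈ E}} Re w/((Re w)² + (Im w − s)²) ds`. -/
def omegaH (w : ℂ) (E : Set ℂ) : ℝ :=
  (1 / Real.pi) *
    ∫ s in {s : ℝ | Complex.I * (s : ℂ) ∈ E}, w.re / (w.re ^ 2 + (w.im - s) ^ 2)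

/-- The Euclidean arclength of the closed arc of the unit circle containing `1`
with endpoints `a` and `conj a` (where `Im a > 0`), namely `2·arg a`. -/
def arcLength (a : ℂ) : ℝ := 2 * Complex.arg a

/-- The harmonic measure at `0` with respect to the unit disc of the closed arc of the
unit circle containing `1` with endpoints `a` and `conj a`: `ℓ(A)/(2π)`. -/
def omegaDiscZero (a : ℂ) : ℝ := arcLength a / (2 * Real.pi)

/-- `Π_α := {z ∈ ℂ : Im z > |Re z|^α}`. -/
def PiDom (α : ℝ) : Set ℂ := {z : ℂ | |z.re| ^ α < z.im}

/-- `W(θ) := {z ≠ 0 : arg z ∈ (π/2 − θ, π/2)}`. -/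
def Wsector (θ : ℝ) : Set ℂ :=
  {z : ℂ | z ≠ 0 ∧ Complex.arg z ∈ Set.Ioo (Real.pi / 2 - θ) (Real.pi / 2)}

/-- `Ξ(α,θ) := ({Re z ≤ 0} ∩ Π_α) ∪ W(θ)`. -/
def Xi (α θ : ℝ) : Set ℂ := ({z : ℂ | z.re ≤ 0} ∩ PiDom α) ∪ Wsector θ

/-!
In the right half-plane the geodesic `(-1, 1)` becomes `(0, ∞)` and the hyperbolic projection onto
it is `w ↦ |w|`. So the projection of `z` is `C⁻¹(|C(z)|) = (a - b)/(a + b)` with `a = |1 + z|`,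
`b = |1 - z|`, and `v^o(t) = ½ |log ρ_t|`. On the other hand `ω(1, Θ_t, ℍ) = (2/π) arctan(1/ρ_t)`
lies between `min(1, 1/ρ_t)/π` and `min(1, 1/ρ_t)`, so the sum is bounded as soon as `ρ_t` stays
away from `0` for `t ≥ 1`. It does, because `ρ_t = |C(φ_t(0))|` is continuous and positive, and
exceeds `1` once `φ_t(0)` is close to the Denjoy-Wolff point `1`.
-/

theorem arctanh_neg (x : ℝ) : arctanh (-x) = -arctanh x := by
  rw [arctanh, arctanh, show (1 + -x) / (1 - -x) = ((1 + x) / (1 - x))⁻¹ by rw [inv_div]; ring,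
    Real.log_inv]
  ring

theorem arctanh_nonneg {x : ℝ} (h0 : 0 ≤ x) (h1 : x < 1) : 0 ≤ arctanh x := by
  have : 1 ≤ (1 + x) / (1 - x) := by rw [le_div_iff₀ (by linarith)]; linarith
  exact mul_nonneg (by norm_num) (Real.log_nonneg this)

theorem arctanh_abs {x : ℝ} (hx : |x| < 1) : arctanh |x| = |arctanh x| := by
  rcases le_total 0 x with h | h
  · rw [abs_of_nonneg h, abs_of_nonneg (arctanh_nonneg h (by rwa [abs_of_nonneg h] at hx))]
  · have := arctanh_nonneg (neg_nonneg.2 h) (by rwa [abs_of_nonpos h] at hx)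
    rw [arctanh_neg] at this
    rw [abs_of_nonpos h, abs_of_nonpos (by linarith), arctanh_neg]

theorem arctanh_lt_arctanh {x y : ℝ} (hx : -1 < x) (hxy : x < y) (hy : y < 1) :
    arctanh x < arctanh y := by
  have hlt : (1 + x) / (1 - x) < (1 + y) / (1 - y) := by
    rw [div_lt_div_iff₀ (by linarith) (by linarith)]; nlinarith
  have := Real.log_lt_log (div_pos (by linarith) (by linarith)) hlt
  rw [arctanh, arctanh]; linarith

theorem arctanh_sub_div_add {a b : ℝ} (ha : 0 < a) (hb : 0 < b) :
    arctanh ((a - b) / (a + b)) = 1 / 2 * Real.log (a / b) := by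
  rw [arctanh]
  congr 2
  field_simp [hb.ne']
  ring

theorem sub_div_add_mem_Ioo {a b : ℝ} (ha : 0 < a) (hb : 0 < b) :
    (a - b) / (a + b) ∈ Ioo (-1 : ℝ) 1 := by
  constructor
  · rw [lt_div_iff₀ (by linarith)]; linarith
  · rw [div_lt_one (by linarith)]; linarith

theorem zero_mem_unitDisc : (0 : ℂ) ∈ unitDisc := by simp [unitDisc]

theorem norm_one_add_pos {z : ℂ} (hz : z ∈ unitDisc) : 0 < ‖1 + z‖ := by
  have := norm_sub_norm_le (1 : ℂ) (-z)
  rw [norm_neg, sub_neg_eq_add, norm_one] at this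
  have : ‖z‖ < 1 := hz
  linarith

theorem norm_one_sub_pos {z : ℂ} (hz : z ∈ unitDisc) : 0 < ‖1 - z‖ := by
  have := norm_sub_norm_le (1 : ℂ) z
  rw [norm_one] at this
  have : ‖z‖ < 1 := hz
  linarith

def pseudoDist (z w : ℂ) : ℝ := ‖(z - w) / (1 - starRingEnd ℂ z * w)‖

/-- With `a = ‖1 + z‖`, `b = ‖1 - z‖`, the denominator is `4 |1 - z̄ s|²` after completing the
square `a² (1 - s)² + b² (1 + s)² = (a (1 - s) - b (1 + s))² + 2 a b (1 - s²)`; so on `(-1, 1)` the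
pseudo-distance to `z` is smallest where that square vanishes, at `s = (a - b) / (a + b)`. -/
theorem one_sub_pseudoDist_ofReal_sq {z : ℂ} (hz : z ∈ unitDisc) {s : ℝ}
    (hs : s ∈ Ioo (-1 : ℝ) 1) :
    1 - pseudoDist z s ^ 2 = 4 * (1 - s ^ 2) * (1 - ‖z‖ ^ 2) /
      ((‖1 + z‖ * (1 - s) - ‖1 - z‖ * (1 + s)) ^ 2 +
        2 * (1 - s ^ 2) * (‖1 + z‖ * ‖1 - z‖ + 1 - ‖z‖ ^ 2)) := by
  have hz' : ‖z‖ < 1 := hz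
  have hsq : ∀ w : ℂ, ‖w‖ ^ 2 = w.re ^ 2 + w.im ^ 2 := fun w => by
    rw [Complex.sq_norm, Complex.normSq_apply]; ring
  have ha := hsq (1 + z)
  have hb := hsq (1 - z)
  have hz2 := hsq z
  have hN := hsq (z - s)
  have hD := hsq (1 - starRingEnd ℂ z * s)
  simp only [add_re, add_im, sub_re, sub_im, one_re, one_im, ofReal_re, ofReal_im, mul_re, mul_im,
    conj_re, conj_im] at ha hb hN hD
  have hDN : ‖1 - starRingEnd ℂ z * s‖ ^ 2 - ‖z - s‖ ^ 2 = (1 - s ^ 2) * (1 - ‖z‖ ^ 2) := by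
    rw [hN, hD, hz2]; ring
  have hpos : 0 < (1 - s ^ 2) * (1 - ‖z‖ ^ 2) :=
    mul_pos (by nlinarith [hs.1, hs.2]) (by nlinarith [norm_nonneg z])
  have hD4 : 4 * ‖1 - starRingEnd ℂ z * s‖ ^ 2 = (‖1 + z‖ * (1 - s) - ‖1 - z‖ * (1 + s)) ^ 2 +
      2 * (1 - s ^ 2) * (‖1 + z‖ * ‖1 - z‖ + 1 - ‖z‖ ^ 2) := by
    linear_combination 4 * hD - (1 - s) ^ 2 * ha - (1 + s) ^ 2 * hb + 2 * (1 - s ^ 2) * hz2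
  have hDpos : 0 < ‖1 - starRingEnd ℂ z * s‖ ^ 2 := by nlinarith [sq_nonneg ‖z - s‖]
  rw [pseudoDist, norm_div, div_pow, ← hD4, one_sub_div hDpos.ne', hDN, mul_assoc,
    mul_div_mul_left _ _ four_ne_zero]

theorem pseudoDist_ofReal_lt_one {z : ℂ} (hz : z ∈ unitDisc) {s : ℝ} (hs : s ∈ Ioo (-1 : ℝ) 1) :
    pseudoDist z s < 1 := by
  have h := one_sub_pseudoDist_ofReal_sq hz hs
  have hz' : ‖z‖ < 1 := hz
  have hu : 0 < 1 - s ^ 2 := by nlinarith [hs.1, hs.2]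
  have hE : 0 < 1 - ‖z‖ ^ 2 := by nlinarith [norm_nonneg z]
  have hK : 0 < ‖1 + z‖ * ‖1 - z‖ + 1 - ‖z‖ ^ 2 := by
    nlinarith [mul_nonneg (norm_nonneg (1 + z)) (norm_nonneg (1 - z))]
  have : 0 < 1 - pseudoDist z s ^ 2 := by
    rw [h]
    exact div_pos (by nlinarith [mul_pos hu hE])
      (by nlinarith [mul_pos hu hK, sq_nonneg (‖1 + z‖ * (1 - s) - ‖1 - z‖ * (1 + s))])
  nlinarith [show 0 ≤ pseudoDist z s from norm_nonneg _]

theorem pseudoDist_ofReal_lt {z : ℂ} (hz : z ∈ unitDisc) {s : ℝ} (hs : s ∈ Ioo (-1 : ℝ) 1)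
    (hne : s ≠ (‖1 + z‖ - ‖1 - z‖) / (‖1 + z‖ + ‖1 - z‖)) :
    pseudoDist z ((‖1 + z‖ - ‖1 - z‖) / (‖1 + z‖ + ‖1 - z‖) : ℝ) < pseudoDist z s := by
  set a := ‖1 + z‖
  set b := ‖1 - z‖
  have ha : 0 < a := norm_one_add_pos hz
  have hb : 0 < b := norm_one_sub_pos hz
  set r := (a - b) / (a + b) with hr_def
  have hr := sub_div_add_mem_Ioo ha hb
  have hz' : ‖z‖ < 1 := hz
  have hE : 0 < 1 - ‖z‖ ^ 2 := by nlinarith [norm_nonneg z]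
  have hu : 0 < 1 - s ^ 2 := by nlinarith [hs.1, hs.2]
  have hur : 0 < 1 - r ^ 2 := by nlinarith [hr.1, hr.2]
  have hr0 : a * (1 - r) - b * (1 + r) = 0 := by
    rw [hr_def]; field_simp; ring
  have hs0 : a * (1 - s) - b * (1 + s) ≠ 0 := by
    refine fun h => hne ?_
    rw [hr_def, eq_div_iff (by positivity)]
    linarith
  have hsq : 0 < (a * (1 - s) - b * (1 + s)) ^ 2 := by positivity
  have hK : 0 < a * b + 1 - ‖z‖ ^ 2 := by nlinarith [mul_pos ha hb]
  suffices 1 - pseudoDist z s ^ 2 < 1 - pseudoDist z r ^ 2 by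
    have h0 : 0 ≤ pseudoDist z r := norm_nonneg _
    nlinarith [show 0 ≤ pseudoDist z s from norm_nonneg _]
  rw [one_sub_pseudoDist_ofReal_sq hz hs, one_sub_pseudoDist_ofReal_sq hz hr, hr0,
    div_lt_div_iff₀ (by nlinarith [mul_pos hu hK]) (by nlinarith [mul_pos hur hK])]
  nlinarith [mul_pos (mul_pos hu hur) (mul_pos hE hsq)]

theorem IsOrthProjection.eq_ofReal {p : ℂ → ℂ} (hp : IsOrthProjection 1 p) {z : ℂ}
    (hz : z ∈ unitDisc) :
    p z = ((‖1 + z‖ - ‖1 - z‖) / (‖1 + z‖ + ‖1 - z‖) : ℝ) := by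
  obtain ⟨⟨r, hr, hpz⟩, hmin⟩ := hp z hz
  rw [hpz, mul_one]
  by_contra hne
  have hr₀ := sub_div_add_mem_Ioo (norm_one_add_pos hz) (norm_one_sub_pos hz)
  have := hmin _ hr₀
  rw [hpz, mul_one, mul_one] at this
  exact this.not_gt <| arctanh_lt_arctanh (neg_one_lt_zero.trans_le (norm_nonneg _))
    (pseudoDist_ofReal_lt hz hr fun h => hne (by rw [h])) (pseudoDist_ofReal_lt_one hz hr)

theorem kD_zero_ofReal (r : ℝ) : kD 0 r = arctanh |r| := by
  simp [kD]

theorem IsOrthProjection.kD_zero {p : ℂ → ℂ} (hp : IsOrthProjection 1 p) {z : ℂ}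
    (hz : z ∈ unitDisc) : kD 0 (p z) = 1 / 2 * |Real.log ‖cayley z‖| := by
  have ha := norm_one_add_pos hz
  have hb := norm_one_sub_pos hz
  rw [hp.eq_ofReal hz, kD_zero_ofReal, arctanh_abs (abs_lt.2 (sub_div_add_mem_Ioo ha hb)),
    arctanh_sub_div_add ha hb, cayley, norm_div, abs_mul,
    abs_of_pos (by norm_num : (0 : ℝ) < 1 / 2)]

theorem preimage_Theta (ρ : ℝ) :
    {s : ℝ | I * (s : ℂ) ∈ Theta ρ} = Iic (-ρ) ∪ Ici ρ := by
  ext s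
  simp only [Theta, mem_ofPred_eq, mem_union, mem_Iic, mem_Ici]
  constructor
  · rintro ⟨y, hy, h⟩
    obtain rfl : s = y := by exact_mod_cast mul_left_cancel₀ I_ne_zero hy
    rcases le_abs.mp h with h | h
    · exact Or.inr h
    · exact Or.inl (by linarith)
  · rintro (h | h)
    · exact ⟨s, rfl, le_abs.mpr (Or.inr (by linarith))⟩
    · exact ⟨s, rfl, le_abs.mpr (Or.inl h)⟩

theorem omegaH_one_Theta {ρ : ℝ} (hρ : 0 < ρ) :
    omegaH 1 (Theta ρ) = 2 / Real.pi * Real.arctan ρ⁻¹ := by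
  have hkernel : ∀ s : ℝ, (1 : ℂ).re / ((1 : ℂ).re ^ 2 + ((1 : ℂ).im - s) ^ 2) = (1 + s ^ 2)⁻¹ := by
    simp
  rw [omegaH, preimage_Theta]
  simp_rw [hkernel]
  rw [setIntegral_union (Iic_disjoint_Ici.2 (by linarith)) measurableSet_Ici
      integrable_inv_one_add_sq.integrableOn integrable_inv_one_add_sq.integrableOn,
    integral_Ici_eq_integral_Ioi, integral_Ioi_inv_one_add_sq, integral_Iic_inv_one_add_sq,
    Real.arctan_neg, Real.arctan_inv_of_pos hρ]
  ring

theorem arctan_le_min {x : ℝ} (hx : 0 ≤ x) : Real.arctan x ≤ Real.pi / 2 * min 1 x := by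
  have hπ : 1 ≤ Real.pi / 2 := by linarith [Real.pi_gt_three]
  rcases le_total 1 x with h | h
  · rw [min_eq_left h, mul_one]; exact (Real.arctan_lt_pi_div_two x).le
  · rw [min_eq_right h]
    calc Real.arctan x ≤ Real.tan (Real.arctan x) :=
          Real.le_tan (Real.arctan_nonneg.2 hx) (Real.arctan_lt_pi_div_two x)
      _ = x := Real.tan_arctan x
      _ ≤ Real.pi / 2 * x := le_mul_of_one_le_left hx hπ

theorem min_div_two_le_arctan {x : ℝ} (hx : 0 ≤ x) : min 1 x / 2 ≤ Real.arctan x := by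
  rcases le_total 1 x with h | h
  · rw [min_eq_left h]
    calc 1 / 2 ≤ Real.pi / 4 := by linarith [Real.pi_gt_three]
      _ = Real.arctan 1 := Real.arctan_one.symm
      _ ≤ Real.arctan x := Real.arctan_mono h
  · rw [min_eq_right h]
    have hsqrt : √(1 + x ^ 2) ≤ 2 := by
      rw [Real.sqrt_le_left (by norm_num)]; nlinarith
    calc x / 2 ≤ x / √(1 + x ^ 2) := div_le_div_of_nonneg_left hx (by positivity) hsqrt
      _ = Real.sin (Real.arctan x) := (Real.sin_arctan x).symm
      _ ≤ Real.arctan x := Real.sin_le (Real.arctan_nonneg.2 hx)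

theorem omegaH_one_Theta_mem_Icc {ρ : ℝ} (hρ : 0 < ρ) :
    omegaH 1 (Theta ρ) ∈ Icc (min 1 ρ⁻¹ / Real.pi) (min 1 ρ⁻¹) := by
  have hx : 0 ≤ ρ⁻¹ := inv_nonneg.2 hρ.le
  rw [omegaH_one_Theta hρ]
  constructor
  · calc min 1 ρ⁻¹ / Real.pi = 2 / Real.pi * (min 1 ρ⁻¹ / 2) := by ring
      _ ≤ _ := mul_le_mul_of_nonneg_left (min_div_two_le_arctan hx) (by positivity)
  · calc 2 / Real.pi * Real.arctan ρ⁻¹ ≤ 2 / Real.pi * (Real.pi / 2 * min 1 ρ⁻¹) :=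
          mul_le_mul_of_nonneg_left (arctan_le_min hx) (by positivity)
      _ = min 1 ρ⁻¹ := by field_simp

theorem abs_half_abs_log_add_half_log_omegaH_le {m ρ : ℝ} (hm : 0 < m) (hmρ : m ≤ ρ) :
    |1 / 2 * |Real.log ρ| + 1 / 2 * Real.log (omegaH 1 (Theta ρ))| ≤
      (Real.log Real.pi + |Real.log m|) / 2 := by
  have hρ : 0 < ρ := hm.trans_le hmρ
  obtain ⟨hlo, hup⟩ := omegaH_one_Theta_mem_Icc hρ
  have hmin : 0 < min 1 ρ⁻¹ := lt_min one_pos (inv_pos.2 hρ)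
  have hlog_lo := Real.log_le_log (div_pos hmin Real.pi_pos) hlo
  have hlog_up := Real.log_le_log ((div_pos hmin Real.pi_pos).trans_le hlo) hup
  rw [Real.log_div hmin.ne' Real.pi_pos.ne'] at hlog_lo
  have hlogm := Real.log_le_log hm hmρ
  have := neg_abs_le (Real.log m)
  have := abs_nonneg (Real.log m)
  have := Real.log_nonneg (by linarith [Real.pi_gt_three] : 1 ≤ Real.pi)
  rcases le_total 1 ρ with h | h
  · rw [min_eq_right (inv_le_one_of_one_le₀ h), Real.log_inv] at hlog_lo hlog_up
    rw [abs_of_nonneg (Real.log_nonneg h), abs_le]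
    constructor <;> linarith
  · rw [min_eq_left (one_le_inv₀ hρ |>.2 h), Real.log_one] at hlog_lo hlog_up
    have := Real.log_nonpos hρ.le h
    rw [abs_of_nonpos this, abs_le]
    constructor <;> linarith

theorem ContinuousOn.exists_pos_forall_Ici_le {f : ℝ → ℝ} {a c : ℝ}
    (hf : ContinuousOn f (Ici a)) (hpos : ∀ t ∈ Ici a, 0 < f t) (hc : 0 < c)
    (hev : ∀ᶠ t in atTop, c ≤ f t) : ∃ m, 0 < m ∧ ∀ t ∈ Ici a, m ≤ f t := by
  obtain ⟨T, hT⟩ := eventually_atTop.1 hev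
  obtain ⟨m, hm, hmf⟩ := isCompact_Icc.exists_forall_le' (hf.mono Icc_subset_Ici_self)
    fun t ht => hpos t ht.1
  refine ⟨min m c, lt_min hm hc, fun t ht => ?_⟩
  rcases le_total t T with h | h
  · exact (min_le_left _ _).trans (hmf t ⟨ht, h⟩)
  · exact (min_le_right _ _).trans (hT t h)

theorem norm_cayley_pos {z : ℂ} (hz : z ∈ unitDisc) : 0 < ‖cayley z‖ := by
  rw [cayley, norm_div]
  exact div_pos (norm_one_add_pos hz) (norm_one_sub_pos hz)

theorem continuousOn_cayley : ContinuousOn cayley unitDisc :=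
  (continuousOn_const.add continuousOn_id).div (continuousOn_const.sub continuousOn_id)
    fun _ hz => norm_pos_iff.1 (norm_one_sub_pos hz)

theorem norm_ofReal_mul_exp_I_mul {ρ : ℝ} (hρ : 0 ≤ ρ) (θ : ℝ) :
    ‖(ρ : ℂ) * exp (I * θ)‖ = ρ := by
  rw [norm_mul, mul_comm I, norm_exp_ofReal_mul_I, mul_one, norm_real, Real.norm_of_nonneg hρ]

namespace IsDiscSemigroup

variable {φ : ℝ → ℂ → ℂ}

theorem continuousOn_orbit (hφ : IsDiscSemigroup φ) {z : ℂ} (hz : z ∈ unitDisc) :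
    ContinuousOn (fun t => φ t z) (Ici 0) :=
  hφ.cont.comp (continuous_id.prodMk continuous_const).continuousOn fun _ ht => ⟨ht, hz⟩

theorem eventually_one_le_norm_cayley (hφ : IsDiscSemigroup φ) (hτ : IsDenjoyWolff φ 1) :
    ∀ᶠ t in atTop, 1 ≤ ‖cayley (φ t 0)‖ := by
  have hlim := hτ.2 0 zero_mem_unitDisc
  have hlt : ∀ᶠ t in atTop, ‖1 - φ t 0‖ < ‖1 + φ t 0‖ :=
    (hlim.const_sub 1).norm.eventually_lt (hlim.const_add 1).norm (by norm_num)
  filter_upwards [hlt, eventually_ge_atTop 0] with t ht ht0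
  rw [cayley, norm_div, one_le_div (norm_one_sub_pos (hφ.mapsTo t ht0 zero_mem_unitDisc))]
  exact ht.le

theorem exists_pos_le_norm_cayley (hφ : IsDiscSemigroup φ) (hτ : IsDenjoyWolff φ 1) :
    ∃ m, 0 < m ∧ ∀ t ∈ Ici (0 : ℝ), m ≤ ‖cayley (φ t 0)‖ := by
  have horbit : MapsTo (fun t => φ t 0) (Ici 0) unitDisc :=
    fun t ht => hφ.mapsTo t ht zero_mem_unitDisc
  have hcont : ContinuousOn (fun t => ‖cayley (φ t 0)‖) (Ici 0) := continuous_norm.comp_continuousOn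
    (continuousOn_cayley.comp (hφ.continuousOn_orbit zero_mem_unitDisc) horbit)
  exact hcont.exists_pos_forall_Ici_le (fun t ht => norm_cayley_pos (horbit ht)) one_pos
    (hφ.eventually_one_le_norm_cayley hτ)

end IsDiscSemigroup

/-- **Lemma 4.1:** the orthogonal speed is comparable with `−(1/2) log ω(1, Θ_t, ℍ)`,
where `Θ_t = {iy : |y| ≥ ρ_t}`. -/
theorem orthSpeed_add_half_log_omegaH_bounded
    (φ : ℝ → ℂ → ℂ) (p : ℂ → ℂ) (ρ θf : ℝ → ℝ)
    (hφ : IsNonElliptic φ) (hτ : IsDenjoyWolff φ 1) (hp : IsOrthProjection 1 p)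
    (hpolar : ∀ t : ℝ, 0 ≤ t → 0 < ρ t ∧
      θf t ∈ Set.Ioo (-(Real.pi / 2)) (Real.pi / 2) ∧
      cayley (φ t 0) = (ρ t : ℂ) * Complex.exp (Complex.I * (θf t : ℂ))) :
    ∃ K : ℝ, 0 < K ∧ ∀ t : ℝ, 1 ≤ t →
      |orthSpeed φ p t + (1 / 2) * Real.log (omegaH 1 (Theta (ρ t)))| ≤ K := by
  have hρ : ∀ t, 0 ≤ t → ‖cayley (φ t 0)‖ = ρ t := fun t ht => by
    obtain ⟨hρpos, -, hc⟩ := hpolar t ht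
    rw [hc, norm_ofReal_mul_exp_I_mul hρpos.le]
  obtain ⟨m, hm, hmρ⟩ := hφ.exists_pos_le_norm_cayley hτ
  have hlogπ : 0 < Real.log Real.pi := Real.log_pos (by linarith [Real.pi_gt_three])
  refine ⟨(Real.log Real.pi + |Real.log m|) / 2, by positivity, fun t ht => ?_⟩
  have ht0 : (0 : ℝ) ≤ t := zero_le_one.trans ht
  rw [orthSpeed, hp.kD_zero (hφ.mapsTo t ht0 zero_mem_unitDisc), hρ t ht0]
  exact abs_half_abs_log_add_half_log_omegaH_le hm (hρ t ht0 ▸ hmρ t ht0)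

end
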